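/- If $w \in \mathcal{L}^{\alpha,p}$ with $\alpha > 0$ and $1 < p \le n/\alpha$, then $w \in \mathcal{KS}_\alpha$, i.e., the Morrey–Campanato class with exponent $p > 1$ is contained in the Kerman–Sawyer class. -/

import Mathlib

open MeasureTheory ENNReal Real
open scoped RealInnerProductSpace

noncomputable section

abbrev Rn (n : ℕ) := EuclideanSpace ℝ (Fin n)

/-- A dyadic cube in `ℝⁿ`. -/
def IsDyadicCube (n : ℕ) (Q : Set (Rn n)) : Prop :=
  ∃ (j : ℤ) (k : Fin n → ℤ),
    Q = {x : Rn n | ∀ i, (k i : ℝ) * 2 ^ j ≤ x i ∧ x i < ((k i : ℝ) + 1) * 2 ^ j}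

/-- Kerman–Sawyer "norm". -/
def KSnorm (n : ℕ) (α : ℝ) (w : Rn n → ℝ) : ℝ≥0∞ :=
  ⨆ Q : {Q : Set (Rn n) // IsDyadicCube n Q},
    (∫⁻ x in Q.1, ENNReal.ofReal (w x))⁻¹ *
      ∫⁻ x in Q.1, ∫⁻ y in Q.1, ENNReal.ofReal (w x * w y * ‖x - y‖ ^ (α - n))

/-- Morrey–Campanato "norm". -/
def MCnorm (n : ℕ) (α p : ℝ) (w : Rn n → ℝ) : ℝ≥0∞ :=
  ⨆ (x : Rn n) (r : {r : ℝ // 0 < r}),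
    ENNReal.ofReal (r.1 ^ α) *
      ((ENNReal.ofReal (r.1 ^ (n : ℝ)))⁻¹ *
        ∫⁻ y in Metric.ball x r.1, ENNReal.ofReal (w y ^ p)) ^ (1 / p)

/-- Surface measure on the sphere of radius `ρ`. -/
def sphMeasureR (n : ℕ) (ρ : ℝ) : Measure (Rn n) :=
  (μH[(n : ℝ) - 1]).restrict (Metric.sphere (0 : Rn n) ρ)

def sphMeasure (n : ℕ) : Measure (Rn n) := sphMeasureR n 1

/-- Fourier extension from the sphere of radius `ρ`. -/
def extR (n : ℕ) (ρ : ℝ) (f : Rn n → ℂ) (x : Rn n) : ℂ :=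
  ∫ ω, Complex.exp (-(Complex.I * (⟪x, ω⟫ : ℝ))) * f ω ∂(sphMeasureR n ρ)

def extS (n : ℕ) (f : Rn n → ℂ) (x : Rn n) : ℂ := extR n 1 f x

/-- Fourier transform. -/
def ft (n : ℕ) (f : Rn n → ℂ) (ξ : Rn n) : ℂ :=
  ∫ x, Complex.exp (-(Complex.I * (⟪x, ξ⟫ : ℝ))) * f x

/-- Convolution. -/
def conv (n : ℕ) (K f : Rn n → ℂ) (x : Rn n) : ℂ :=
  ∫ y, K (x - y) * f y

/-- `|∇|^s e^{-it(-Δ)^{γ/2}} f`. -/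
def fracProp (n : ℕ) (s γ t : ℝ) (f : Rn n → ℂ) (x : Rn n) : ℂ :=
  ((2 * π) ^ (-(n : ℝ)) : ℝ) •
    ∫ ξ, (Real.rpow ‖ξ‖ s) •
      (Complex.exp (Complex.I * ((⟪x, ξ⟫ - t * ‖ξ‖ ^ γ : ℝ) : ℂ)) * ft n f ξ)

def L2w (n : ℕ) (w : Rn n → ℝ) (g : Rn n → ℂ) : ℝ≥0∞ :=
  ∫⁻ x, (‖g x‖₊ : ℝ≥0∞) ^ 2 * ENNReal.ofReal (w x)

/-!
Fix a dyadic cube `Q` of side `2 ^ j` and let `a σ` be the `w`-mass of a dyadic subcube `σ` of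
`Q` of side `2 ^ ℓ`. Discretising the Riesz kernel at dyadic scales, and using that nearby points
lie in neighbouring cubes, bounds the Kerman–Sawyer double integral over `Q` by the energy
`∑ σ, 2 ^ (ℓ (α - n)) a σ ^ 2`. The Morrey condition gives `a σ ≤ 2 ^ (d + ℓ (n - α))`; sort the
cubes into layers `i` with `a σ ≈ 2 ^ (d + ℓ (n - α) - i)`, so that layer `i` contributes at most
`2 ^ (d - i) ∑ a σ` to the energy. Inside a layer, the cubes `h` generations below a maximal cube
`σ₀` carry total mass at most `a σ₀`, and, by reverse Hölder (this is where `p > 1` enters) and the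
Morrey bound for `∫ w ^ p` on `σ₀`, at most `2 ^ (p (i + 1) - h α (p - 1)) a σ₀`. Interpolating
gives geometric decay in `h` at the price of a factor `2 ^ ((i + 1) / 2)`; as the maximal cubes
are disjoint, layer `i` has total mass `≲ 2 ^ (i / 2) w(Q)`, and the sum over `i` converges.
-/

namespace MorreyCampanato

variable {n : ℕ}

def twoPow (y : ℝ) : ℝ≥0∞ := 2 ^ y

lemma twoPow_ne_zero (y : ℝ) : twoPow y ≠ 0 := by simp [twoPow]

lemma twoPow_ne_top (y : ℝ) : twoPow y ≠ ⊤ := by simp [twoPow]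

lemma twoPow_add (a b : ℝ) : twoPow (a + b) = twoPow a * twoPow b :=
  ENNReal.rpow_add a b two_ne_zero ofNat_ne_top

lemma twoPow_zero : twoPow 0 = 1 := by simp [twoPow]

lemma twoPow_le_twoPow {a b : ℝ} (h : a ≤ b) : twoPow a ≤ twoPow b :=
  ENNReal.rpow_le_rpow_of_exponent_le one_le_two h

lemma twoPow_rpow (a c : ℝ) : twoPow a ^ c = twoPow (a * c) := by
  rw [twoPow, twoPow, ← ENNReal.rpow_mul]

lemma ofReal_two_rpow (y : ℝ) : ENNReal.ofReal ((2 : ℝ) ^ y) = twoPow y := by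
  rw [twoPow, ← ENNReal.ofReal_rpow_of_pos two_pos, ENNReal.ofReal_ofNat]

lemma ofReal_two_zpow (m : ℤ) : ENNReal.ofReal ((2 : ℝ) ^ m) = twoPow m := by
  rw [← Real.rpow_intCast, ofReal_two_rpow]

def twoPowSeries (τ : ℝ) : ℝ≥0∞ := ∑' h : ℕ, twoPow (-(h * τ))

lemma twoPowSeries_ne_top {τ : ℝ} (hτ : 0 < τ) : twoPowSeries τ ≠ ⊤ := by
  have hgeom : ∀ h : ℕ, twoPow (-(h * τ)) = twoPow (-τ) ^ h := fun h => by
    rw [← ENNReal.rpow_natCast, twoPow_rpow]; ring_nf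
  simp_rw [twoPowSeries, hgeom, ENNReal.tsum_geometric, Ne, ENNReal.inv_eq_top,
    tsub_eq_zero_iff_le, not_le]
  exact ENNReal.rpow_lt_one_of_one_lt_of_neg one_lt_two (neg_neg_of_pos hτ)

lemma le_twoPow_mul_of_twoPow_lt {a b e : ℝ} {x : ℝ≥0∞} (hx : twoPow e < x)
    (hab : a ≤ b + e) : twoPow a ≤ twoPow b * x :=
  (twoPow_le_twoPow hab).trans (by rw [twoPow_add]; exact mul_le_mul_right hx.le _)

lemma le_twoPow_mul_of_twoPow_lt_of_rpow_le {a m : ℝ≥0∞} {e c p : ℝ} (hp : 1 ≤ p)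
    (he : twoPow e < a) (ha : a ^ p ≤ twoPow c * m) : a ≤ twoPow (c - e * (p - 1)) * m := by
  have hlow : twoPow (e * (p - 1)) * a ≤ twoPow c * m :=
    calc twoPow (e * (p - 1)) * a ≤ a ^ (p - 1) * a := by
          rw [← twoPow_rpow]; exact mul_le_mul_left (ENNReal.rpow_le_rpow he.le (by linarith)) _
      _ = a ^ p := by
          nth_rw 2 [← ENNReal.rpow_one a]
          rw [← ENNReal.rpow_add_of_nonneg _ _ (by linarith) zero_le_one, sub_add_cancel]
      _ ≤ twoPow c * m := ha
  calc a = twoPow (-(e * (p - 1))) * (twoPow (e * (p - 1)) * a) := by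
        rw [← mul_assoc, ← twoPow_add, neg_add_cancel, twoPow_zero, one_mul]
    _ ≤ twoPow (-(e * (p - 1))) * (twoPow c * m) := mul_le_mul_right hlow _
    _ = twoPow (c - e * (p - 1)) * m := by rw [← mul_assoc, ← twoPow_add, neg_add_eq_sub]

lemma natCast_le_twoPow (N : ℕ) : (N : ℝ≥0∞) ≤ twoPow N := by
  rw [twoPow, ENNReal.rpow_natCast]
  exact_mod_cast Nat.lt_two_pow_self.le

lemma mul_le_sq_add_sq (a b : ℝ≥0∞) : a * b ≤ a ^ 2 + b ^ 2 := by
  rcases le_total a b with h | h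
  · exact (mul_le_mul_left h b).trans ((sq b).symm ▸ le_add_self)
  · exact (mul_le_mul_right h a).trans ((sq a).symm ▸ le_self_add)

lemma le_rpow_mul_of_le_of_le_mul {x a b : ℝ≥0∞} {s : ℝ} (hs₀ : 0 ≤ s) (hs₁ : s ≤ 1)
    (hxa : x ≤ a) (hxb : x ≤ b * a) : x ≤ b ^ s * a := by
  have hsplit : ∀ y : ℝ≥0∞, y = y ^ s * y ^ (1 - s) := fun y => by
    rw [← ENNReal.rpow_add_of_nonneg _ _ hs₀ (by linarith), add_sub_cancel, ENNReal.rpow_one]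
  calc x = x ^ s * x ^ (1 - s) := hsplit x
    _ ≤ (b * a) ^ s * a ^ (1 - s) :=
        mul_le_mul' (ENNReal.rpow_le_rpow hxb hs₀) (ENNReal.rpow_le_rpow hxa (by linarith))
    _ = b ^ s * a := by rw [ENNReal.mul_rpow_of_nonneg _ _ hs₀, mul_assoc, ← hsplit]

section Holder

variable {X : Type*} [MeasurableSpace X] {μ : Measure X} {f : X → ℝ≥0∞} {p : ℝ}

lemma rpow_setLIntegral_le (hf : AEMeasurable f μ) (hp : 1 < p) (s : Set X) :
    (∫⁻ x in s, f x ∂μ) ^ p ≤ μ s ^ (p - 1) * ∫⁻ x in s, f x ^ p ∂μ := by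
  have hholder := ENNReal.lintegral_mul_le_Lp_mul_Lq (μ.restrict s)
    (Real.HolderConjugate.conjExponent hp) hf.restrict (aemeasurable_const (b := (1 : ℝ≥0∞)))
  simp only [Pi.mul_apply, mul_one, ENNReal.one_rpow, setLIntegral_const, one_mul] at hholder
  have hp0 : 0 ≤ p := by linarith
  calc (∫⁻ x in s, f x ∂μ) ^ p
      ≤ ((∫⁻ x in s, f x ^ p ∂μ) ^ (1 / p) * μ s ^ (1 / p.conjExponent)) ^ p :=
        ENNReal.rpow_le_rpow hholder hp0
    _ = μ s ^ (p - 1) * ∫⁻ x in s, f x ^ p ∂μ := by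
        rw [ENNReal.mul_rpow_of_nonneg _ _ hp0, ← ENNReal.rpow_mul, ← ENNReal.rpow_mul,
          one_div_mul_cancel (by linarith), ENNReal.rpow_one, mul_comm, Real.conjExponent,
          one_div_div, div_mul_cancel₀ _ (by linarith)]

end Holder

lemma tsum_indicator_setLIntegral_le {X ι : Type*} [MeasurableSpace X] {μ : Measure X}
    [Countable ι] {I : Set ι} {s : ι → Set X} (hs : ∀ i, MeasurableSet (s i))
    (hI : I.PairwiseDisjoint s) {S : Set X} (hsS : ∀ i ∈ I, s i ⊆ S) (f : X → ℝ≥0∞) :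
    ∑' i, I.indicator (fun i => ∫⁻ x in s i, f x ∂μ) i ≤ ∫⁻ x in S, f x ∂μ := by
  rw [← tsum_subtype, ← lintegral_biUnion I.to_countable (fun i _ => hs i) hI]
  exact lintegral_mono_set (Set.iUnion₂_subset hsS)

lemma ofReal_rpow_le_twoPow_mul_tsum {ρ c s : ℝ} (j : ℤ) (hc : 1 ≤ c) (hs : s ≤ 0)
    (hρ : 0 < ρ) (hρc : ρ ≤ c * 2 ^ j) :
    ENNReal.ofReal (ρ ^ s) ≤
      twoPow (-s) * ∑' g : ℕ, if ρ ≤ c * 2 ^ (j - g) then twoPow ((j - g) * s) else 0 := by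
  obtain ⟨g, hg₁, hg₂⟩ := exists_nat_pow_near ((one_le_div hρ).2 hρc) one_lt_two
  have h2g : (2 : ℝ) ^ (j - g) = 2 ^ j / 2 ^ g := by rw [zpow_sub₀ two_ne_zero, zpow_natCast]
  have hle : ρ ≤ c * 2 ^ (j - g) := by
    rw [h2g, mul_div_assoc', le_div_iff₀ (by positivity)]
    rwa [le_div_iff₀ hρ, mul_comm] at hg₁
  have hlt : (2 : ℝ) ^ (j - g - 1) < ρ := by
    have h2g' : (2 : ℝ) ^ (j - g - 1) = 2 ^ j / 2 ^ (g + 1) := by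
      rw [zpow_sub₀ two_ne_zero, h2g, zpow_one, pow_succ, div_div]
    rw [h2g', div_lt_iff₀ (by positivity)]
    rw [div_lt_iff₀ hρ, mul_comm] at hg₂
    nlinarith [zpow_pos (two_pos (α := ℝ)) j]
  calc ENNReal.ofReal (ρ ^ s) ≤ ENNReal.ofReal (((2 : ℝ) ^ (j - g - 1)) ^ s) :=
        ENNReal.ofReal_le_ofReal (Real.rpow_le_rpow_of_nonpos (by positivity) hlt.le hs)
    _ = twoPow (-s) * twoPow ((j - g) * s) := by
        rw [← Real.rpow_intCast, ← Real.rpow_mul two_pos.le, ofReal_two_rpow, ← twoPow_add]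
        push_cast; ring_nf
    _ ≤ twoPow (-s) * ∑' g : ℕ, if ρ ≤ c * 2 ^ (j - g) then twoPow ((j - g) * s) else 0 :=
        mul_le_mul_right (le_of_eq_of_le (if_pos hle).symm (ENNReal.le_tsum g)) _

def dyadicCube (n : ℕ) (j : ℤ) (k : Fin n → ℤ) : Set (Rn n) :=
  {x | ∀ i, (k i : ℝ) * 2 ^ j ≤ x i ∧ x i < ((k i : ℝ) + 1) * 2 ^ j}

def dyadicIndex (j : ℤ) (x : Rn n) : Fin n → ℤ := fun i => ⌊x i / 2 ^ j⌋

lemma mem_dyadicCube_iff {j : ℤ} {k : Fin n → ℤ} {x : Rn n} :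
    x ∈ dyadicCube n j k ↔ dyadicIndex j x = k := by
  have h2 : (0 : ℝ) < 2 ^ j := zpow_pos two_pos j
  simp only [dyadicCube, dyadicIndex, Set.mem_ofPred_eq, funext_iff, Int.floor_eq_iff,
    le_div_iff₀ h2, div_lt_iff₀ h2]

lemma mem_dyadicCube_dyadicIndex (j : ℤ) (x : Rn n) : x ∈ dyadicCube n j (dyadicIndex j x) :=
  mem_dyadicCube_iff.2 rfl

lemma pairwise_disjoint_dyadicCube (j : ℤ) :
    Pairwise (Function.onFun Disjoint (dyadicCube n j)) :=
  fun _ _ hkk' => Set.disjoint_left.2 fun _ hx hx' =>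
    hkk' ((mem_dyadicCube_iff.1 hx).symm.trans (mem_dyadicCube_iff.1 hx'))

lemma dyadicCube_eq_preimage_pi (j : ℤ) (k : Fin n → ℤ) :
    dyadicCube n j k = (MeasurableEquiv.toLp 2 (Fin n → ℝ)).symm ⁻¹'
      Set.univ.pi fun i => Set.Ico ((k i : ℝ) * 2 ^ j) (((k i : ℝ) + 1) * 2 ^ j) := by
  ext x
  simp [dyadicCube, MeasurableEquiv.coe_toLp_symm, Set.mem_pi, Set.mem_Ico]

lemma measurableSet_dyadicCube (j : ℤ) (k : Fin n → ℤ) : MeasurableSet (dyadicCube n j k) := by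
  rw [dyadicCube_eq_preimage_pi]
  exact (MeasurableEquiv.measurable _) (MeasurableSet.univ_pi fun _ => measurableSet_Ico)

def dyadicAncestor (h : ℕ) (k : Fin n → ℤ) : Fin n → ℤ := fun i => k i / 2 ^ h

lemma dyadicIndex_add_natCast (j : ℤ) (h : ℕ) (x : Rn n) :
    dyadicIndex (j + h) x = dyadicAncestor h (dyadicIndex j x) := by
  funext i
  have : x i / 2 ^ (j + h) = x i / 2 ^ j / ((2 ^ h : ℕ) : ℝ) := by
    rw [zpow_add₀ two_ne_zero, zpow_natCast, div_div]; push_cast; rfl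
  simp only [dyadicIndex, dyadicAncestor, this, Int.floor_div_natCast]
  norm_cast

lemma dyadicCube_subset_ancestor (j : ℤ) (h : ℕ) (k : Fin n → ℤ) :
    dyadicCube n j k ⊆ dyadicCube n (j + h) (dyadicAncestor h k) := fun x hx => by
  rw [mem_dyadicCube_iff, dyadicIndex_add_natCast, mem_dyadicCube_iff.1 hx]

lemma eq_dyadicAncestor_of_mem {j : ℤ} {h : ℕ} {k k' : Fin n → ℤ} {x : Rn n}
    (hx : x ∈ dyadicCube n j k) (hx' : x ∈ dyadicCube n (j + h) k') :
    k' = dyadicAncestor h k := by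
  rw [← mem_dyadicCube_iff.1 hx, ← mem_dyadicCube_iff.1 hx', dyadicIndex_add_natCast]

lemma dyadicAncestor_zero (k : Fin n → ℤ) : dyadicAncestor 0 k = k := by
  funext i; simp [dyadicAncestor]

lemma dyadicAncestor_dyadicAncestor (h h' : ℕ) (k : Fin n → ℤ) :
    dyadicAncestor h (dyadicAncestor h' k) = dyadicAncestor (h' + h) k := by
  funext i
  simp only [dyadicAncestor, pow_add]
  exact Int.ediv_ediv_of_nonneg (by positivity)

lemma abs_sub_apply_lt_of_mem_dyadicCube {j : ℤ} {k : Fin n → ℤ} {x y : Rn n}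
    (hx : x ∈ dyadicCube n j k) (hy : y ∈ dyadicCube n j k) (i : Fin n) :
    |x i - y i| < 2 ^ j := by
  obtain ⟨hx₁, hx₂⟩ := hx i
  obtain ⟨hy₁, hy₂⟩ := hy i
  rw [abs_lt]
  constructor <;> linarith

lemma norm_le_of_forall_abs_le {z : Rn n} {c : ℝ} (hc : 0 ≤ c) (hz : ∀ i, |z i| ≤ c) :
    ‖z‖ ≤ n * c := by
  have hsum : ∑ i, ‖z i‖ ^ 2 ≤ (n * c) ^ 2 :=
    calc ∑ i, ‖z i‖ ^ 2 ≤ ∑ _i : Fin n, c ^ 2 :=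
          Finset.sum_le_sum fun i _ => pow_le_pow_left₀ (norm_nonneg _) (hz i) 2
      _ = n * c ^ 2 := by simp
      _ ≤ (n * c) ^ 2 := by
          rw [mul_pow]; gcongr; exact_mod_cast Nat.le_self_pow two_ne_zero n
  rw [EuclideanSpace.norm_eq]
  exact Real.sqrt_le_iff.2 ⟨by positivity, hsum⟩

lemma norm_sub_le_of_mem_dyadicCube {j : ℤ} {k : Fin n → ℤ} {x y : Rn n}
    (hx : x ∈ dyadicCube n j k) (hy : y ∈ dyadicCube n j k) : ‖x - y‖ ≤ n * 2 ^ j :=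
  norm_le_of_forall_abs_le (zpow_pos two_pos j).le fun i =>
    (abs_sub_apply_lt_of_mem_dyadicCube hx hy i).le

def dyadicCorner (j : ℤ) (k : Fin n → ℤ) : Rn n := WithLp.toLp 2 fun i => (k i : ℝ) * 2 ^ j

lemma dyadicCorner_mem (j : ℤ) (k : Fin n → ℤ) : dyadicCorner j k ∈ dyadicCube n j k :=
  fun i => ⟨le_rfl, by simpa [dyadicCorner, add_mul] using zpow_pos (two_pos (α := ℝ)) j⟩

lemma dyadicCube_subset_ball (j : ℤ) (k : Fin n → ℤ) :
    dyadicCube n j k ⊆ Metric.ball (dyadicCorner j k) ((n + 1) * 2 ^ j) := fun x hx => by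
  rw [Metric.mem_ball, dist_eq_norm]
  have := norm_sub_le_of_mem_dyadicCube hx (dyadicCorner_mem j k)
  have : (0 : ℝ) < 2 ^ j := zpow_pos two_pos j
  linarith

def neighbours (n : ℕ) : Finset (Fin n → ℤ) := Finset.Icc (-(n : Fin n → ℤ)) n

lemma sub_apply_le_of_mem_dyadicCube {m : ℤ} {t t' : Fin n → ℤ} {x y : Rn n}
    (hx : x ∈ dyadicCube n m t) (hy : y ∈ dyadicCube n m t') (hxy : ‖x - y‖ ≤ n * 2 ^ m)
    (i : Fin n) : t' i - t i ≤ n := by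
  have hyx : y i - x i ≤ n * 2 ^ m := (le_abs_self _).trans <|
    (abs_sub_comm (y i) (x i)).trans_le ((PiLp.norm_apply_le (x - y) i).trans hxy)
  have : ((t' i - t i - 1 : ℤ) : ℝ) * 2 ^ m < n * 2 ^ m := by
    push_cast; linarith [(hx i).2, (hy i).1]
  have := (mul_lt_mul_iff_left₀ (zpow_pos two_pos m)).1 this
  exact_mod_cast Int.sub_one_lt_iff.1 (by exact_mod_cast this)

lemma sub_mem_neighbours_of_mem_dyadicCube {m : ℤ} {t t' : Fin n → ℤ} {x y : Rn n}
    (hx : x ∈ dyadicCube n m t) (hy : y ∈ dyadicCube n m t') (hxy : ‖x - y‖ ≤ n * 2 ^ m) :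
    t' - t ∈ neighbours n := by
  refine Finset.mem_Icc.2 ⟨fun i => ?_, fun i => ?_⟩
  · have := sub_apply_le_of_mem_dyadicCube hy hx (by rwa [norm_sub_rev]) i
    simp only [Pi.neg_apply, Pi.sub_apply, Pi.natCast_apply]
    linarith
  · simpa only [Pi.sub_apply, Pi.natCast_apply] using sub_apply_le_of_mem_dyadicCube hx hy hxy i

lemma volume_dyadicCube (j : ℤ) (k : Fin n → ℤ) :
    volume (dyadicCube n j k) = twoPow (n * j) := by
  rw [dyadicCube_eq_preimage_pi, (EuclideanSpace.volume_preserving_symm_measurableEquiv_toLp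
    (Fin n)).measure_preimage (MeasurableSet.univ_pi fun _ => measurableSet_Ico).nullMeasurableSet,
    volume_pi_pi]
  have hside : ∀ i, volume (Set.Ico ((k i : ℝ) * 2 ^ j) (((k i : ℝ) + 1) * 2 ^ j)) = twoPow j :=
    fun i => by rw [Real.volume_Ico, ← ofReal_two_zpow]; ring_nf
  simp_rw [hside]
  rw [Finset.prod_const, Finset.card_univ, Fintype.card_fin, ← ENNReal.rpow_natCast,
    twoPow_rpow, mul_comm]

section Morrey

variable {α p d : ℝ}

/-- The Morrey condition on dyadic cubes, with constant `2 ^ d`: writing every constant as a power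
of two turns the bookkeeping of the stopping-time argument into arithmetic of exponents. -/
def DyadicMorreyBound (n : ℕ) (α p d : ℝ) (f : Rn n → ℝ≥0∞) : Prop :=
  ∀ (ℓ : ℤ) (t : Fin n → ℤ), ∫⁻ x in dyadicCube n ℓ t, f x ^ p ≤ twoPow (p * d + ℓ * (n - α * p))

lemma DyadicMorreyBound.setLIntegral_le {f : Rn n → ℝ≥0∞} (hf : DyadicMorreyBound n α p d f)
    (hfm : Measurable f) (hp : 1 < p) {ℓ : ℤ} {t : Fin n → ℤ} {s : Set (Rn n)}
    (hs : s ⊆ dyadicCube n ℓ t) : ∫⁻ x in s, f x ≤ twoPow (d + ℓ * (n - α)) := by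
  rw [← ENNReal.rpow_le_rpow_iff (by linarith : 0 < p), twoPow_rpow]
  have hvol : volume s ≤ twoPow (n * ℓ) := volume_dyadicCube ℓ t ▸ measure_mono hs
  calc (∫⁻ x in s, f x) ^ p ≤ volume s ^ (p - 1) * ∫⁻ x in s, f x ^ p :=
        rpow_setLIntegral_le hfm.aemeasurable hp s
    _ ≤ twoPow (n * ℓ) ^ (p - 1) * twoPow (p * d + ℓ * (n - α * p)) :=
        mul_le_mul' (ENNReal.rpow_le_rpow hvol (by linarith))
          ((lintegral_mono_set hs).trans (hf ℓ t))
    _ = twoPow ((d + ℓ * (n - α)) * p) := by rw [twoPow_rpow, ← twoPow_add]; ring_nf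

lemma lintegral_ball_rpow_le_MCnorm {w : Rn n → ℝ} (hw : 0 ≤ w) (hp : 0 < p) (x : Rn n) {r : ℝ}
    (hr : 0 < r) :
    ∫⁻ y in Metric.ball x r, ENNReal.ofReal (w y) ^ p ≤
      MCnorm n α p w ^ p * ENNReal.ofReal r ^ ((n : ℝ) - α * p) := by
  set R := ENNReal.ofReal r
  have hR0 : R ≠ 0 := by simpa [R] using hr
  have hRt : R ≠ ⊤ := ENNReal.ofReal_ne_top
  have hle : R ^ α * ((R ^ (n : ℝ))⁻¹ * ∫⁻ y in Metric.ball x r, ENNReal.ofReal (w y) ^ p)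
      ^ (1 / p) ≤ MCnorm n α p w := by
    have := le_iSup₂ (f := fun (x : Rn n) (r : {r : ℝ // 0 < r}) => ENNReal.ofReal (r.1 ^ α) *
      ((ENNReal.ofReal (r.1 ^ (n : ℝ)))⁻¹ *
        ∫⁻ y in Metric.ball x r.1, ENNReal.ofReal (w y ^ p)) ^ (1 / p)) x ⟨r, hr⟩
    rw [MCnorm]
    simpa only [← ENNReal.ofReal_rpow_of_pos hr, ← ENNReal.ofReal_rpow_of_nonneg (hw _) hp.le]
      using this
  have hpow := ENNReal.rpow_le_rpow hle hp.le
  rw [ENNReal.mul_rpow_of_nonneg _ _ hp.le, ← ENNReal.rpow_mul, ← ENNReal.rpow_mul,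
    one_div_mul_cancel hp.ne', ENNReal.rpow_one] at hpow
  calc ∫⁻ y in Metric.ball x r, ENNReal.ofReal (w y) ^ p
      = R ^ ((n : ℝ) - α * p) * (R ^ (α * p) * ((R ^ (n : ℝ))⁻¹ *
          ∫⁻ y in Metric.ball x r, ENNReal.ofReal (w y) ^ p)) := by
        rw [← mul_assoc, ← mul_assoc, ← ENNReal.rpow_add _ _ hR0 hRt, sub_add_cancel,
          ENNReal.mul_inv_cancel (by simp [hR0]) (by simp [hRt]), one_mul]
    _ ≤ R ^ ((n : ℝ) - α * p) * MCnorm n α p w ^ p := mul_le_mul_right hpow _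
    _ = MCnorm n α p w ^ p * R ^ ((n : ℝ) - α * p) := mul_comm _ _

lemma exists_dyadicMorreyBound_of_MCnorm_ne_top {w : Rn n → ℝ} (hw : 0 ≤ w) (hp : 0 < p)
    (hαp : α * p ≤ n) (hMC : MCnorm n α p w ≠ ⊤) :
    ∃ d, DyadicMorreyBound n α p d fun x => ENNReal.ofReal (w x) := by
  obtain ⟨N, hN⟩ := ENNReal.exists_nat_gt hMC
  set m : ℕ := N + (n + 1)
  have hM : MCnorm n α p w ≤ twoPow m :=
    hN.le.trans ((natCast_le_twoPow N).trans (twoPow_le_twoPow (by simp [m]; positivity)))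
  have hn : ENNReal.ofReal (n + 1) ≤ twoPow m :=
    calc ENNReal.ofReal (n + 1) = ((n + 1 : ℕ) : ℝ≥0∞) := by
          exact_mod_cast ENNReal.ofReal_natCast (n + 1)
      _ ≤ twoPow m := (natCast_le_twoPow _).trans (twoPow_le_twoPow (by simp [m]))
  refine ⟨m + m * (n - α * p) / p, fun ℓ t => ?_⟩
  calc ∫⁻ x in dyadicCube n ℓ t, ENNReal.ofReal (w x) ^ p
      ≤ ∫⁻ x in Metric.ball (dyadicCorner ℓ t) ((n + 1) * 2 ^ ℓ), ENNReal.ofReal (w x) ^ p :=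
        lintegral_mono_set (dyadicCube_subset_ball ℓ t)
    _ ≤ MCnorm n α p w ^ p * ENNReal.ofReal ((n + 1) * 2 ^ ℓ) ^ ((n : ℝ) - α * p) :=
        lintegral_ball_rpow_le_MCnorm hw hp _ (by positivity)
    _ ≤ twoPow m ^ p * (twoPow m * twoPow ℓ) ^ ((n : ℝ) - α * p) := by
        rw [ENNReal.ofReal_mul (by positivity), ofReal_two_zpow]
        gcongr
    _ = twoPow (p * (m + m * (n - α * p) / p) + ℓ * (n - α * p)) := by
        rw [← twoPow_add, twoPow_rpow, twoPow_rpow, ← twoPow_add]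
        congr 1
        field_simp
        ring

end Morrey

section Pieces

variable (j : ℤ) (k : Fin n → ℤ)

/-- `σ = (g, t)` is the dyadic cube of index `t`, `g` generations below `dyadicCube n j k`;
intersecting with the latter spares us describing which `t` occur. -/
def piece (σ : ℕ × (Fin n → ℤ)) : Set (Rn n) := dyadicCube n j k ∩ dyadicCube n (j - σ.1) σ.2

def pieceMass (f : Rn n → ℝ≥0∞) (σ : ℕ × (Fin n → ℤ)) : ℝ≥0∞ := ∫⁻ x in piece j k σ, f x

lemma measurableSet_piece (σ : ℕ × (Fin n → ℤ)) : MeasurableSet (piece j k σ) :=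
  (measurableSet_dyadicCube j k).inter (measurableSet_dyadicCube _ _)

lemma pairwise_disjoint_piece (g : ℕ) :
    Pairwise (Function.onFun Disjoint fun t : Fin n → ℤ => piece j k (g, t)) :=
  fun _ _ htt' => (pairwise_disjoint_dyadicCube _ htt').mono Set.inter_subset_right
    Set.inter_subset_right

lemma mem_piece_dyadicIndex {x : Rn n} (hx : x ∈ dyadicCube n j k) (g : ℕ) :
    x ∈ piece j k (g, dyadicIndex (j - g) x) :=
  ⟨hx, mem_dyadicCube_dyadicIndex _ x⟩

/-- Points at distance `≤ n 2 ^ (j - g)` lie in neighbouring pieces of generation `g`. -/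
lemma setLIntegral_near_diagonal_le {f : Rn n → ℝ≥0∞} (hfm : Measurable f) (g : ℕ) :
    ∫⁻ z in dyadicCube n j k ×ˢ dyadicCube n j k ∩ {z | ‖z.1 - z.2‖ ≤ n * 2 ^ (j - g)},
        f z.1 * f z.2 ∂volume.prod volume ≤
      2 * (neighbours n).card * ∑' t, pieceMass j k f (g, t) ^ 2 := by
  have hcover : dyadicCube n j k ×ˢ dyadicCube n j k ∩ {z | ‖z.1 - z.2‖ ≤ n * 2 ^ (j - g)} ⊆
      ⋃ (δ : neighbours n) (t : Fin n → ℤ), piece j k (g, t) ×ˢ piece j k (g, t + δ) := by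
    rintro ⟨x, y⟩ ⟨⟨hx, hy⟩, hxy⟩
    have hδ := sub_mem_neighbours_of_mem_dyadicCube (mem_dyadicCube_dyadicIndex (j - g) x)
      (mem_dyadicCube_dyadicIndex (j - g) y) hxy
    refine Set.mem_iUnion₂.2 ⟨⟨_, hδ⟩, dyadicIndex (j - g) x, mem_piece_dyadicIndex j k hx g, ?_⟩
    simpa using mem_piece_dyadicIndex j k hy g
  calc _ ≤ ∫⁻ z in ⋃ (δ : neighbours n) (t : Fin n → ℤ),
          piece j k (g, t) ×ˢ piece j k (g, t + δ), f z.1 * f z.2 ∂volume.prod volume :=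
        lintegral_mono_set hcover
    _ ≤ ∑' (δ : neighbours n) (t : Fin n → ℤ), ∫⁻ z in piece j k (g, t) ×ˢ piece j k (g, t + δ),
          f z.1 * f z.2 ∂volume.prod volume :=
        (lintegral_iUnion_le _ _).trans (ENNReal.tsum_le_tsum fun _ => lintegral_iUnion_le _ _)
    _ = ∑' (δ : neighbours n) (t : Fin n → ℤ),
          pieceMass j k f (g, t) * pieceMass j k f (g, t + δ) := by
        simp_rw [← Measure.prod_restrict, lintegral_prod_mul hfm.aemeasurable hfm.aemeasurable]
        rfl
    _ ≤ ∑' (δ : neighbours n) (t : Fin n → ℤ),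
          (pieceMass j k f (g, t) ^ 2 + pieceMass j k f (g, t + δ) ^ 2) :=
        ENNReal.tsum_le_tsum fun _ => ENNReal.tsum_le_tsum fun _ => mul_le_sq_add_sq _ _
    _ = ∑' _δ : neighbours n, 2 * ∑' t, pieceMass j k f (g, t) ^ 2 := by
        refine tsum_congr fun δ => ?_
        rw [ENNReal.tsum_add, two_mul]
        congr 1
        exact (Equiv.addRight δ.1).tsum_eq fun t => pieceMass j k f (g, t) ^ 2
    _ = 2 * (neighbours n).card * ∑' t, pieceMass j k f (g, t) ^ 2 := by
        rw [tsum_fintype, Finset.sum_const, Finset.card_univ, Fintype.card_coe, nsmul_eq_mul]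
        ring

end Pieces

lemma ofReal_norm_sub_rpow_le {α : ℝ} (hn : 0 < n) (hαn : α < n) {j : ℤ} {k : Fin n → ℤ}
    {x y : Rn n} (hx : x ∈ dyadicCube n j k) (hy : y ∈ dyadicCube n j k) :
    ENNReal.ofReal (‖x - y‖ ^ (α - n)) ≤ twoPow (n - α) *
      ∑' g : ℕ, if ‖x - y‖ ≤ n * 2 ^ (j - g) then twoPow ((j - g) * (α - n)) else 0 := by
  rcases eq_or_ne x y with rfl | hxy
  · simp [Real.zero_rpow (sub_ne_zero.2 hαn.ne)]
  simpa using ofReal_rpow_le_twoPow_mul_tsum j (Nat.one_le_cast.2 hn) (by linarith : α - n ≤ 0)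
    (norm_pos_iff.2 (sub_ne_zero.2 hxy)) (norm_sub_le_of_mem_dyadicCube hx hy)

lemma lintegral_lintegral_riesz_le {α : ℝ} (hn : 0 < n) (hαn : α < n) {f : Rn n → ℝ≥0∞}
    (hfm : Measurable f) (j : ℤ) (k : Fin n → ℤ) :
    ∫⁻ x in dyadicCube n j k, ∫⁻ y in dyadicCube n j k,
        f x * f y * ENNReal.ofReal (‖x - y‖ ^ (α - n)) ≤
      twoPow (n - α) * (2 * (neighbours n).card) *
        ∑' σ : ℕ × (Fin n → ℤ), twoPow ((j - σ.1) * (α - n)) * pieceMass j k f σ ^ 2 := by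
  set Q := dyadicCube n j k
  set S : ℕ → Set (Rn n × Rn n) := fun g => {z | ‖z.1 - z.2‖ ≤ n * 2 ^ (j - g)}
  have hS : ∀ g, MeasurableSet (S g) := fun g =>
    measurableSet_le (by fun_prop : Measurable fun z : Rn n × Rn n => ‖z.1 - z.2‖) measurable_const
  have hQQ : MeasurableSet (Q ×ˢ Q) :=
    (measurableSet_dyadicCube j k).prod (measurableSet_dyadicCube j k)
  have hkernel : ∀ z ∈ Q ×ˢ Q, f z.1 * f z.2 * ENNReal.ofReal (‖z.1 - z.2‖ ^ (α - n)) ≤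
      twoPow (n - α) * ∑' g : ℕ,
        twoPow ((j - g) * (α - n)) * (S g).indicator (fun z => f z.1 * f z.2) z := by
    rintro ⟨x, y⟩ ⟨hx, hy⟩
    refine (mul_le_mul_right (ofReal_norm_sub_rpow_le hn hαn hx hy) _).trans_eq ?_
    simp_rw [← ENNReal.tsum_mul_left]
    refine tsum_congr fun g => ?_
    simp only [Set.indicator_apply, Set.mem_ofPred_eq, S]
    split_ifs <;> ring
  calc _ = ∫⁻ z in Q ×ˢ Q, f z.1 * f z.2 * ENNReal.ofReal (‖z.1 - z.2‖ ^ (α - n))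
        ∂volume.prod volume := by
        rw [← Measure.prod_restrict, lintegral_prod _ (by fun_prop)]
    _ ≤ ∫⁻ z in Q ×ˢ Q, twoPow (n - α) * ∑' g : ℕ,
          twoPow ((j - g) * (α - n)) * (S g).indicator (fun z => f z.1 * f z.2) z
        ∂volume.prod volume := setLIntegral_mono' hQQ hkernel
    _ = twoPow (n - α) * ∑' g : ℕ, twoPow ((j - g) * (α - n)) *
          ∫⁻ z in Q ×ˢ Q ∩ S g, f z.1 * f z.2 ∂volume.prod volume := by
        rw [lintegral_const_mul' _ _ (twoPow_ne_top _), lintegral_tsum fun g =>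
          ((Measurable.indicator (by fun_prop) (hS g)).const_mul _).aemeasurable]
        congr 1
        refine tsum_congr fun g => ?_
        rw [lintegral_const_mul' _ _ (twoPow_ne_top _), lintegral_indicator (hS g),
          Measure.restrict_restrict (hS g), Set.inter_comm]
    _ ≤ twoPow (n - α) * ∑' g : ℕ, twoPow ((j - g) * (α - n)) *
          (2 * (neighbours n).card * ∑' t, pieceMass j k f (g, t) ^ 2) := by
        gcongr with g
        exact setLIntegral_near_diagonal_le j k hfm g
    _ = _ := by
        rw [ENNReal.tsum_prod', mul_assoc]
        simp_rw [← ENNReal.tsum_mul_left]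
        exact tsum_congr fun g => tsum_congr fun t => by ring

section Ancestors

def ancestorAt (g : ℕ) (σ : ℕ × (Fin n → ℤ)) : ℕ × (Fin n → ℤ) :=
  (g, dyadicAncestor (σ.1 - g) σ.2)

lemma ancestorAt_self (σ : ℕ × (Fin n → ℤ)) : ancestorAt σ.1 σ = σ := by
  simp [ancestorAt, dyadicAncestor_zero]

lemma ancestorAt_ancestorAt {g g' : ℕ} {σ : ℕ × (Fin n → ℤ)} (hg : g ≤ g') (hg' : g' ≤ σ.1) :
    ancestorAt g (ancestorAt g' σ) = ancestorAt g σ := by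
  simp only [ancestorAt, dyadicAncestor_dyadicAncestor, Prod.mk.injEq, true_and]
  congr 1
  omega

lemma dyadicCube_subset_ancestorAt (j : ℤ) {g : ℕ} {σ : ℕ × (Fin n → ℤ)} (hg : g ≤ σ.1) :
    dyadicCube n (j - σ.1) σ.2 ⊆ dyadicCube n (j - g) (ancestorAt g σ).2 := by
  have hlevel : j - σ.1 + ((σ.1 - g : ℕ) : ℤ) = j - g := by push_cast [hg]; ring
  exact hlevel ▸ dyadicCube_subset_ancestor (j - σ.1) (σ.1 - g) σ.2

variable (L : Set (ℕ × (Fin n → ℤ)))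

def topmost : Set (ℕ × (Fin n → ℤ)) := {σ | σ ∈ L ∧ ∀ g < σ.1, ancestorAt g σ ∉ L}

open Classical in
/-- Junk value `σ` when no ancestor of `σ` lies in `L`. -/
def topAncestor (σ : ℕ × (Fin n → ℤ)) : ℕ × (Fin n → ℤ) :=
  if h : ∃ g, g ≤ σ.1 ∧ ancestorAt g σ ∈ L then ancestorAt (Nat.find h) σ else σ

variable {L}

open Classical in
lemma topAncestor_spec {σ : ℕ × (Fin n → ℤ)} (hσ : σ ∈ L) :
    topAncestor L σ ∈ topmost L ∧ ∃ g ≤ σ.1, topAncestor L σ = ancestorAt g σ := by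
  have hex : ∃ g, g ≤ σ.1 ∧ ancestorAt g σ ∈ L := ⟨σ.1, le_rfl, (ancestorAt_self σ).symm ▸ hσ⟩
  obtain ⟨hle, hmem⟩ := Nat.find_spec hex
  rw [topAncestor, dif_pos hex]
  refine ⟨⟨hmem, fun g (hg : g < Nat.find hex) hg_mem => ?_⟩, _, hle, rfl⟩
  rw [ancestorAt_ancestorAt hg.le hle] at hg_mem
  exact Nat.find_min hex hg ⟨by omega, hg_mem⟩

lemma dyadicCube_subset_topAncestor (j : ℤ) {σ : ℕ × (Fin n → ℤ)} (hσ : σ ∈ L) :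
    dyadicCube n (j - σ.1) σ.2 ⊆ dyadicCube n (j - (topAncestor L σ).1) (topAncestor L σ).2 := by
  obtain ⟨-, g, hg, htop⟩ := topAncestor_spec hσ
  rw [htop]
  exact dyadicCube_subset_ancestorAt j hg

lemma pairwiseDisjoint_topmost (j : ℤ) :
    (topmost L).PairwiseDisjoint fun σ => dyadicCube n (j - σ.1) σ.2 := by
  intro σ hσ τ hτ hne
  wlog hle : σ.1 ≤ τ.1 generalizing σ τ
  · exact (this hτ hσ hne.symm (le_of_not_ge hle)).symm
  rcases hle.lt_or_eq with hlt | heq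
  · refine Set.disjoint_left.2 fun x hxσ hxτ => hτ.2 σ.1 hlt ?_
    have hlevel : j - σ.1 = j - τ.1 + ((τ.1 - σ.1 : ℕ) : ℤ) := by push_cast [hle]; ring
    dsimp only at hxσ hxτ
    rw [hlevel] at hxσ
    rw [ancestorAt, ← eq_dyadicAncestor_of_mem hxτ hxσ]
    exact hσ.1
  · have hk : σ.2 ≠ τ.2 := fun hk => hne (Prod.ext heq hk)
    show Disjoint (dyadicCube n (j - σ.1) σ.2) (dyadicCube n (j - τ.1) τ.2)
    rw [heq]
    exact pairwise_disjoint_dyadicCube (j - τ.1) hk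

end Ancestors

section Layers

variable {ι : Type*}

def layer (a : ι → ℝ≥0∞) (e : ι → ℝ) (i : ℕ) : Set ι :=
  {σ | twoPow (e σ - (i + 1)) < a σ ∧ a σ ≤ twoPow (e σ - i)}

lemma exists_mem_layer {a : ι → ℝ≥0∞} {e : ι → ℝ} {σ : ι} (h0 : a σ ≠ 0)
    (hle : a σ ≤ twoPow (e σ)) : ∃ i, σ ∈ layer a e i := by
  classical
  have hex : ∃ m : ℕ, twoPow (e σ - (m + 1)) < a σ := by
    obtain ⟨m, hm⟩ := ENNReal.exists_inv_two_pow_lt (ENNReal.div_pos h0 (twoPow_ne_top (e σ))).ne'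
    refine ⟨m, lt_of_le_of_lt (twoPow_le_twoPow (by linarith : e σ - (m + 1) ≤ e σ + -m)) ?_⟩
    rw [twoPow_add, twoPow, twoPow, ENNReal.rpow_neg, ENNReal.rpow_natCast, ENNReal.inv_pow]
    calc _ < 2 ^ e σ * (a σ / 2 ^ e σ) :=
          (ENNReal.mul_lt_mul_iff_right (twoPow_ne_zero _) (twoPow_ne_top _)).2 hm
      _ = a σ := ENNReal.mul_div_cancel (twoPow_ne_zero _) (twoPow_ne_top _)
  refine ⟨Nat.find hex, Nat.find_spec hex, ?_⟩
  cases h : Nat.find hex with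
  | zero => simpa using hle
  | succ m =>
    have := Nat.find_min hex (show m < Nat.find hex by omega)
    simpa using this

end Layers

section StoppingTime

variable {α p d : ℝ} {f : Rn n → ℝ≥0∞} {j : ℤ} {k : Fin n → ℤ}

def massExponent (n : ℕ) (α d : ℝ) (j : ℤ) (σ : ℕ × (Fin n → ℤ)) : ℝ := d + (j - σ.1) * (n - α)

def massLayer (α d : ℝ) (j : ℤ) (k : Fin n → ℤ) (f : Rn n → ℝ≥0∞) (i : ℕ) :
    Set (ℕ × (Fin n → ℤ)) :=
  layer (pieceMass j k f) (massExponent n α d j) i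

lemma piece_subset_dyadicCube (σ : ℕ × (Fin n → ℤ)) :
    piece j k σ ⊆ dyadicCube n (j - σ.1) σ.2 :=
  Set.inter_subset_right

lemma piece_subset_piece_topAncestor {L : Set (ℕ × (Fin n → ℤ))} {σ : ℕ × (Fin n → ℤ)}
    (hσ : σ ∈ L) : piece j k σ ⊆ piece j k (topAncestor L σ) :=
  Set.inter_subset_inter_right _ (dyadicCube_subset_topAncestor j hσ)

lemma pieceMass_le_twoPow (hf : DyadicMorreyBound n α p d f) (hfm : Measurable f) (hp : 1 < p)
    (σ : ℕ × (Fin n → ℤ)) : pieceMass j k f σ ≤ twoPow (massExponent n α d j σ) := by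
  simpa [massExponent, pieceMass] using hf.setLIntegral_le hfm hp (piece_subset_dyadicCube σ)

lemma setLIntegral_piece_rpow_le (hf : DyadicMorreyBound n α p d f) (σ : ℕ × (Fin n → ℤ)) :
    ∫⁻ x in piece j k σ, f x ^ p ≤ twoPow (p * d + (j - σ.1) * (n - α * p)) := by
  simpa using (lintegral_mono_set (piece_subset_dyadicCube σ)).trans (hf (j - σ.1) σ.2)

/-- Hölder gives `a ^ p ≤ |σ| ^ (p - 1) ∫ f ^ p`; divide by the lower bound for `a ^ (p - 1)`
that membership in the layer provides. -/
lemma pieceMass_le_of_mem_massLayer (hfm : Measurable f) (hp : 1 < p) {i : ℕ}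
    {σ : ℕ × (Fin n → ℤ)} (hσ : σ ∈ massLayer α d j k f i) :
    pieceMass j k f σ ≤
      twoPow ((α * (j - σ.1) - d + (i + 1)) * (p - 1)) * ∫⁻ x in piece j k σ, f x ^ p := by
  have hvol : volume (piece j k σ) ≤ twoPow (n * (j - σ.1)) := by
    simpa using (measure_mono (piece_subset_dyadicCube σ)).trans_eq (volume_dyadicCube _ σ.2)
  have hrev : pieceMass j k f σ ^ p ≤ twoPow (n * (j - σ.1) * (p - 1)) *
      ∫⁻ x in piece j k σ, f x ^ p := by
    rw [← twoPow_rpow]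
    exact (rpow_setLIntegral_le hfm.aemeasurable hp _).trans
      (mul_le_mul_left (ENNReal.rpow_le_rpow hvol (by linarith)) _)
  refine (le_twoPow_mul_of_twoPow_lt_of_rpow_le hp.le hσ.1 hrev).trans_eq ?_
  congr 2
  simp only [massExponent]
  ring

lemma tsum_fiber_le (L : Set (ℕ × (Fin n → ℤ))) (F : Rn n → ℝ≥0∞) (σ₀ : ℕ × (Fin n → ℤ)) (g : ℕ) :
    ∑' t, (L ∩ topAncestor L ⁻¹' {σ₀}).indicator (fun σ => ∫⁻ x in piece j k σ, F x) (g, t) ≤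
      ∫⁻ x in piece j k σ₀, F x :=
  tsum_indicator_setLIntegral_le (I := {t | (g, t) ∈ L ∩ topAncestor L ⁻¹' {σ₀}})
    (fun t => measurableSet_piece j k (g, t)) ((pairwise_disjoint_piece j k g).set_pairwise _)
    (fun _ ht => ht.2 ▸ piece_subset_piece_topAncestor ht.1) F

lemma tsum_fiber_pieceMass_le_decay (hf : DyadicMorreyBound n α p d f) (hfm : Measurable f)
    (hp : 1 < p) {i : ℕ} {σ₀ : ℕ × (Fin n → ℤ)} (hσ₀ : σ₀ ∈ massLayer α d j k f i) (h : ℕ) :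
    ∑' t, (massLayer α d j k f i ∩ topAncestor (massLayer α d j k f i) ⁻¹' {σ₀}).indicator
        (pieceMass j k f) (σ₀.1 + h, t) ≤
      twoPow (p * (i + 1) - h * (α * (p - 1))) * pieceMass j k f σ₀ := by
  set L := massLayer α d j k f i
  set c : ℝ := (α * (j - ((σ₀.1 + h : ℕ) : ℝ)) - d + (i + 1)) * (p - 1)
  calc _ ≤ ∑' t, (L ∩ topAncestor L ⁻¹' {σ₀}).indicator
          (fun σ => twoPow c * ∫⁻ x in piece j k σ, f x ^ p) (σ₀.1 + h, t) :=
        ENNReal.tsum_le_tsum fun t =>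
          Set.indicator_le_indicator' fun hσ => pieceMass_le_of_mem_massLayer hfm hp hσ.1
    _ = twoPow c * ∑' t, (L ∩ topAncestor L ⁻¹' {σ₀}).indicator
          (fun σ => ∫⁻ x in piece j k σ, f x ^ p) (σ₀.1 + h, t) := by
        simp_rw [Set.indicator_const_mul]
        exact ENNReal.tsum_mul_left
    _ ≤ twoPow c * twoPow (p * d + (j - σ₀.1) * (n - α * p)) :=
        mul_le_mul_right ((tsum_fiber_le L _ σ₀ _).trans (setLIntegral_piece_rpow_le hf σ₀)) _
    _ ≤ twoPow (p * (i + 1) - h * (α * (p - 1))) * pieceMass j k f σ₀ := by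
        rw [← twoPow_add]
        refine le_twoPow_mul_of_twoPow_lt hσ₀.1 (le_of_eq ?_)
        simp only [c, massExponent]
        push_cast
        ring

lemma tsum_fiber_pieceMass_le (hf : DyadicMorreyBound n α p d f) (hfm : Measurable f)
    (hp : 1 < p) {i : ℕ} {σ₀ : ℕ × (Fin n → ℤ)} (hσ₀ : σ₀ ∈ topmost (massLayer α d j k f i)) :
    ∑' σ, (massLayer α d j k f i ∩ topAncestor (massLayer α d j k f i) ⁻¹' {σ₀}).indicator
        (pieceMass j k f) σ ≤
      twoPow ((i + 1) / 2) * twoPowSeries (α * (p - 1) / (2 * p)) * pieceMass j k f σ₀ := by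
  set L := massLayer α d j k f i
  set F : ℕ → ℝ≥0∞ := fun g => ∑' t, (L ∩ topAncestor L ⁻¹' {σ₀}).indicator (pieceMass j k f) (g, t)
  have hzero : ∀ g < σ₀.1, F g = 0 := fun g hg => ENNReal.tsum_eq_zero.2 fun t =>
    Set.indicator_of_notMem (fun hσ => by
      obtain ⟨-, g', hg', htop⟩ := topAncestor_spec hσ.1
      have : σ₀.1 = g' := by rw [← (Set.mem_singleton_iff.1 hσ.2), htop]; rfl
      omega) _
  have hdecay : ∀ h : ℕ, F (h + σ₀.1) ≤
      twoPow ((i + 1) / 2) * twoPow (-(h * (α * (p - 1) / (2 * p)))) * pieceMass j k f σ₀ := by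
    intro h
    rw [add_comm]
    -- the exponent `1 / (2 p)` leaves `2 ^ ((i + 1) / 2)`, which the factor `2 ^ (-i)` of the
    -- layer absorbs
    refine (le_rpow_mul_of_le_of_le_mul (s := 1 / (2 * p)) (by positivity)
      ((div_le_one (by positivity)).2 (by linarith)) (tsum_fiber_le L f σ₀ _)
      (tsum_fiber_pieceMass_le_decay hf hfm hp hσ₀.1 h)).trans_eq ?_
    rw [twoPow_rpow, ← twoPow_add]
    congr 2
    field_simp
    ring
  rw [ENNReal.tsum_prod', ← ENNReal.summable.sum_add_tsum_nat_add' (k := σ₀.1),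
    Finset.sum_eq_zero fun g hg => hzero g (Finset.mem_range.1 hg), zero_add]
  calc _ ≤ _ := ENNReal.tsum_le_tsum hdecay
    _ = _ := by rw [ENNReal.tsum_mul_right, ENNReal.tsum_mul_left, twoPowSeries]

lemma tsum_massLayer_le (hf : DyadicMorreyBound n α p d f) (hfm : Measurable f) (hp : 1 < p)
    (i : ℕ) :
    ∑' σ, (massLayer α d j k f i).indicator (pieceMass j k f) σ ≤
      twoPow ((i + 1) / 2) * twoPowSeries (α * (p - 1) / (2 * p)) *
        ∫⁻ x in dyadicCube n j k, f x := by
  set L := massLayer α d j k f i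
  set C := twoPow ((i + 1) / 2) * twoPowSeries (α * (p - 1) / (2 * p))
  have hfiber : ∀ σ₀, ∑' σ, (L ∩ topAncestor L ⁻¹' {σ₀}).indicator (pieceMass j k f) σ ≤
      (topmost L).indicator (fun σ₀ => C * pieceMass j k f σ₀) σ₀ := by
    intro σ₀
    by_cases hσ₀ : σ₀ ∈ topmost L
    · rw [Set.indicator_of_mem hσ₀]
      exact tsum_fiber_pieceMass_le hf hfm hp hσ₀
    · rw [Set.indicator_of_notMem hσ₀]
      refine (ENNReal.tsum_eq_zero.2 fun σ => Set.indicator_of_notMem (fun hσ => hσ₀ ?_) _).le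
      exact Set.mem_singleton_iff.1 hσ.2 ▸ (topAncestor_spec hσ.1).1
  calc ∑' σ, L.indicator (pieceMass j k f) σ
      = ∑' σ₀, ∑' σ, (L ∩ topAncestor L ⁻¹' {σ₀}).indicator (pieceMass j k f) σ := by
        rw [← ENNReal.tsum_fiberwise _ (topAncestor L)]
        refine tsum_congr fun σ₀ => ?_
        rw [tsum_subtype, Set.indicator_indicator, Set.inter_comm]
    _ ≤ ∑' σ₀, (topmost L).indicator (fun σ₀ => C * pieceMass j k f σ₀) σ₀ :=
        ENNReal.tsum_le_tsum hfiber
    _ = C * ∑' σ₀, (topmost L).indicator (pieceMass j k f) σ₀ := by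
        simp_rw [Set.indicator_const_mul]
        exact ENNReal.tsum_mul_left
    _ ≤ C * ∫⁻ x in dyadicCube n j k, f x :=
        mul_le_mul_right (tsum_indicator_setLIntegral_le (measurableSet_piece j k)
          ((pairwiseDisjoint_topmost j).mono fun _ => Set.inter_subset_right)
          (fun _ _ => Set.inter_subset_left) f) _

lemma tsum_twoPow_mul_pieceMass_sq_le (hf : DyadicMorreyBound n α p d f) (hfm : Measurable f)
    (hp : 1 < p) :
    ∑' σ : ℕ × (Fin n → ℤ), twoPow ((j - σ.1) * (α - n)) * pieceMass j k f σ ^ 2 ≤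
      twoPow (d + 1 / 2) * twoPowSeries (1 / 2) * twoPowSeries (α * (p - 1) / (2 * p)) *
        ∫⁻ x in dyadicCube n j k, f x := by
  set τ := α * (p - 1) / (2 * p)
  have hlayers : ∀ σ, twoPow ((j - σ.1) * (α - n)) * pieceMass j k f σ ^ 2 ≤
      ∑' i : ℕ, (massLayer α d j k f i).indicator
        (fun σ => twoPow (d - i) * pieceMass j k f σ) σ := by
    intro σ
    rcases eq_or_ne (pieceMass j k f σ) 0 with h0 | h0
    · simp [h0]
    obtain ⟨i, hi⟩ : ∃ i, σ ∈ massLayer α d j k f i :=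
      exists_mem_layer h0 (pieceMass_le_twoPow hf hfm hp σ)
    refine le_trans ?_ (ENNReal.le_tsum i)
    rw [Set.indicator_of_mem hi, sq, ← mul_assoc]
    refine mul_le_mul_left ((mul_le_mul_right hi.2 _).trans_eq ?_) _
    rw [← twoPow_add]
    simp only [massExponent]
    ring_nf
  calc _ ≤ ∑' σ, ∑' i : ℕ, (massLayer α d j k f i).indicator
          (fun σ => twoPow (d - i) * pieceMass j k f σ) σ := ENNReal.tsum_le_tsum hlayers
    _ = ∑' i : ℕ, twoPow (d - i) * ∑' σ, (massLayer α d j k f i).indicator (pieceMass j k f) σ := by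
        rw [ENNReal.tsum_comm]
        simp_rw [Set.indicator_const_mul, ENNReal.tsum_mul_left]
    _ ≤ ∑' i : ℕ, twoPow (d - i) *
          (twoPow ((i + 1) / 2) * twoPowSeries τ * ∫⁻ x in dyadicCube n j k, f x) :=
        ENNReal.tsum_le_tsum fun i => mul_le_mul_right (tsum_massLayer_le hf hfm hp i) _
    _ = _ := by
        have hexp : ∀ i : ℕ, twoPow (d - i) * twoPow ((i + 1) / 2) =
            twoPow (d + 1 / 2) * twoPow (-(i * (1 / 2))) := fun i => by
          rw [← twoPow_add, ← twoPow_add]; ring_nf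
        simp_rw [← mul_assoc, hexp, ENNReal.tsum_mul_right, ENNReal.tsum_mul_left, twoPowSeries]

end StoppingTime

lemma KSnorm_le {α : ℝ} {w : Rn n → ℝ} (hw : 0 ≤ w) {C : ℝ≥0∞}
    (hC : ∀ j k, ∫⁻ x in dyadicCube n j k, ∫⁻ y in dyadicCube n j k,
        ENNReal.ofReal (w x) * ENNReal.ofReal (w y) * ENNReal.ofReal (‖x - y‖ ^ (α - n)) ≤
      C * ∫⁻ x in dyadicCube n j k, ENNReal.ofReal (w x)) :
    KSnorm n α w ≤ C := by
  refine iSup_le fun ⟨Q, j, k, hQ⟩ => ?_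
  subst hQ
  rw [mul_comm, ← div_eq_mul_inv]
  refine ENNReal.div_le_of_le_mul (le_of_eq_of_le ?_ (hC j k))
  simp_rw [ENNReal.ofReal_mul (mul_nonneg (hw _) (hw _)), ENNReal.ofReal_mul (hw _)]
  rfl

end MorreyCampanato

open MorreyCampanato

/-- Morrey–Campanato with exponent `p > 1` is contained in Kerman–Sawyer. -/
theorem mc_subset_ks {n : ℕ} {α p : ℝ} (hα : 0 < α) (hp : 1 < p) (hpn : p ≤ n / α)
    (w : Rn n → ℝ) (hw : 0 ≤ w) (hwm : Measurable w)
    (hMC : MCnorm n α p w ≠ ⊤) :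
    KSnorm n α w ≠ ⊤ := by
  have hαp : α * p ≤ n := by rwa [le_div_iff₀ hα, mul_comm] at hpn
  have hαn : α < n := by nlinarith
  have hn : 0 < n := by exact_mod_cast hα.trans hαn
  obtain ⟨d, hd⟩ := exists_dyadicMorreyBound_of_MCnorm_ne_top hw (by linarith) hαp hMC
  have hfm : Measurable fun x => ENNReal.ofReal (w x) := hwm.ennreal_ofReal
  have hτ : 0 < α * (p - 1) / (2 * p) := div_pos (mul_pos hα (by linarith)) (by linarith)
  refine ne_top_of_le_ne_top ?_ (KSnorm_le hw fun j k =>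
    (lintegral_lintegral_riesz_le hn hαn hfm j k).trans
      ((mul_le_mul_right (tsum_twoPow_mul_pieceMass_sq_le hd hfm hp) _).trans_eq
        (mul_assoc _ _ _).symm))
  exact ENNReal.mul_ne_top (ENNReal.mul_ne_top (twoPow_ne_top _)
      (ENNReal.mul_ne_top ENNReal.ofNat_ne_top (ENNReal.natCast_ne_top _)))
    (ENNReal.mul_ne_top (ENNReal.mul_ne_top (twoPow_ne_top _) (twoPowSeries_ne_top one_half_pos))
      (twoPowSeries_ne_top hτ))
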